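/- arXiv:2108.02301 — 6 statements merged into one kernel-verified Lean document; each statement's English description precedes it below -/
import Mathlib

section
/- Let b ≥ 2 and r ≥ 1 be integers, let p_1 < p_2 < ... < p_r be the first r primes, and let M be the set of divisors of P = p_1^{b-1} p_2^{b-1} ⋯ p_r^{b-1}. Then the GCD sum satisfies Gál's identity: ∑_{m,n ∈ M} gcd(m,n)/lcm(m,n) = ∏_{i=1}^{r} ( b + 2 ∑_{ν=1}^{b-1} (b-ν)/p_i^ν ). -/
/-!
For coprime `M` and `N`, every divisor of `M * N` splits uniquely as a divisor of `M` times a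
divisor of `N`, and both `gcd` and `lcm` split accordingly. Hence
`N ↦ ∑_{m, n ∣ N} gcd(m, n) / lcm(m, n)` is multiplicative and the sum over the divisors of
`P = ∏ pᵢ^(b-1)` is the product of the sums over the divisors of the `pᵢ^(b-1)`. For the pair
`(p^i, p^j)` the summand is `p^(-|i - j|)`, and among the pairs `0 ≤ i, j ≤ b - 1` there are `b`
with `i = j` and `2 (b - ν)` with `|i - j| = ν`, which is the local factor.
-/

open Finset ArithmeticFunction
open scoped Function

theorem sum_range_pow_dist_eq_sum_Icc {R : Type*} [CommRing R] (x : R) (n : ℕ) :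
    ∑ i ∈ range n, x ^ Nat.dist i n = ∑ ν ∈ Icc 1 n, x ^ ν := by
  refine sum_nbij' (n - ·) (n - ·) ?_ ?_ ?_ ?_ ?_ <;> intro i hi <;>
    simp only [mem_range, mem_Icc, Nat.dist] at hi ⊢ <;>
    first | omega | congr 1; omega

theorem sum_range_sum_range_pow_dist {R : Type*} [CommRing R] (x : R) (k : ℕ) :
    ∑ i ∈ range (k + 1), ∑ j ∈ range (k + 1), x ^ Nat.dist i j =
      (k + 1 : R) + 2 * ∑ ν ∈ Icc 1 k, ((k + 1 : R) - ν) * x ^ ν := by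
  induction k with
  | zero => simp
  | succ k ih =>
    have hborder : ∑ i ∈ range (k + 2), ∑ j ∈ range (k + 2), x ^ Nat.dist i j =
        ∑ i ∈ range (k + 1), ∑ j ∈ range (k + 1), x ^ Nat.dist i j
          + 2 * ∑ i ∈ range (k + 1), x ^ Nat.dist i (k + 1) + 1 := by
      simp only [sum_range_succ _ (k + 1), sum_add_distrib, Nat.dist_self, pow_zero,
        Nat.dist_comm (k + 1)]
      ring
    have hcoeff : ∑ ν ∈ Icc 1 (k + 1), ((k + 1 + 1 : R) - ν) * x ^ ν =
        ∑ ν ∈ Icc 1 k, ((k + 1 : R) - ν) * x ^ ν + ∑ ν ∈ Icc 1 (k + 1), x ^ ν := by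
      have hsucc (ν : ℕ) :
          ((k + 1 + 1 : R) - ν) * x ^ ν = ((k + 1 : R) - ν) * x ^ ν + x ^ ν := by
        ring
      rw [sum_congr rfl fun ν _ => hsucc ν, sum_add_distrib,
        sum_Icc_succ_top (by omega : 1 ≤ k + 1) (fun ν => ((k + 1 : R) - ν) * x ^ ν)]
      push_cast
      ring
    rw [hborder, ih, sum_range_pow_dist_eq_sum_Icc]
    push_cast
    rw [hcoeff]
    ring

theorem Nat.Coprime.sum_divisors_mul_eq {M : Type*} [AddCommMonoid M] {m n : ℕ}
    (hmn : m.Coprime n) (f : ℕ → M) :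
    ∑ d ∈ (m * n).divisors, f d = ∑ a ∈ m.divisors, ∑ c ∈ n.divisors, f (a * c) := by
  rw [hmn.divisors_mul, sum_map, ← sum_product']
  exact sum_attach _ fun p : ℕ × ℕ => f (p.1 * p.2)

namespace Nat.Coprime

variable {m n a b c d : ℕ}

theorem gcd_mul_mul_of_dvd (hmn : m.Coprime n) (ha : a ∣ m) (hb : b ∣ m) (hc : c ∣ n)
    (hd : d ∣ n) : (a * c).gcd (b * d) = a.gcd b * c.gcd d := by
  rw [Coprime.gcd_mul _ ((hmn.coprime_dvd_left hb).coprime_dvd_right hd),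
    Coprime.gcd_mul_right_cancel a ((hmn.coprime_dvd_left hb).coprime_dvd_right hc).symm,
    Coprime.gcd_mul_left_cancel c ((hmn.coprime_dvd_left ha).coprime_dvd_right hd)]

theorem lcm_mul_mul_of_dvd (hmn : m.Coprime n) (ha : a ∣ m) (hb : b ∣ m) (hc : c ∣ n)
    (hd : d ∣ n) : (a * c).lcm (b * d) = a.lcm b * c.lcm d := by
  have hcop {x y : ℕ} (hx : x ∣ m) (hy : y ∣ n) : x.Coprime y :=
    (hmn.coprime_dvd_left hx).coprime_dvd_right hy
  rw [← (hcop ha hc).lcm_eq_mul, ← (hcop hb hd).lcm_eq_mul,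
    ← (hcop (Nat.lcm_dvd ha hb) (Nat.lcm_dvd hc hd)).lcm_eq_mul]
  ac_rfl

end Nat.Coprime

theorem Nat.pairwise_coprime_nth_prime_pow (e : ℕ) :
    Pairwise (Nat.Coprime on fun i => Nat.nth Nat.Prime i ^ e) := fun i j hij =>
  Nat.Coprime.pow _ _ <|
    (Nat.coprime_primes (Nat.prime_nth_prime i) (Nat.prime_nth_prime j)).mpr
      ((Nat.nth_injective Nat.infinite_setOfPred_prime).ne hij)

section GcdDivLcmSum

variable {K : Type*} [Field K]

noncomputable def gcdDivLcmSum : ArithmeticFunction K :=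
  ⟨fun N => ∑ m ∈ N.divisors, ∑ n ∈ N.divisors, (m.gcd n : K) / m.lcm n, by simp⟩

theorem gcdDivLcmSum_apply (N : ℕ) :
    (gcdDivLcmSum : ArithmeticFunction K) N =
      ∑ m ∈ N.divisors, ∑ n ∈ N.divisors, (m.gcd n : K) / m.lcm n :=
  rfl

theorem isMultiplicative_gcdDivLcmSum :
    (gcdDivLcmSum : ArithmeticFunction K).IsMultiplicative := by
  refine ⟨by simp [gcdDivLcmSum_apply], fun {M N} hMN => ?_⟩
  simp only [gcdDivLcmSum_apply, hMN.sum_divisors_mul_eq, sum_mul_sum]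
  refine sum_congr rfl fun a ha => sum_congr rfl fun c hc => ?_
  refine sum_congr rfl fun b hb => sum_congr rfl fun d hd => ?_
  rw [Nat.mem_divisors] at ha hb hc hd
  rw [hMN.gcd_mul_mul_of_dvd ha.1 hb.1 hc.1 hd.1, hMN.lcm_mul_mul_of_dvd ha.1 hb.1 hc.1 hd.1]
  push_cast
  exact (div_mul_div_comm _ _ _ _).symm

theorem gcd_div_lcm_pow_pow {p : ℕ} (hp : (p : K) ≠ 0) (i j : ℕ) :
    ((p ^ i).gcd (p ^ j) : K) / (p ^ i).lcm (p ^ j) = (p : K)⁻¹ ^ Nat.dist i j := by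
  wlog hij : i ≤ j generalizing i j
  · rw [Nat.gcd_comm, Nat.lcm_comm, Nat.dist_comm]
    exact this j i (le_of_not_ge hij)
  rw [Nat.gcd_eq_left (pow_dvd_pow p hij), Nat.lcm_eq_right (pow_dvd_pow p hij),
    Nat.dist_eq_sub_of_le hij]
  push_cast
  rw [← Nat.add_sub_cancel' hij, pow_add, div_mul_cancel_left₀ (pow_ne_zero _ hp), inv_pow,
    Nat.add_sub_cancel_left]

theorem gcdDivLcmSum_prime_pow [CharZero K] {p : ℕ} (hp : p.Prime) (k : ℕ) :
    (gcdDivLcmSum : ArithmeticFunction K) (p ^ k) =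
      (k + 1 : K) + 2 * ∑ ν ∈ Icc 1 k, ((k + 1 : K) - ν) / (p : K) ^ ν := by
  simp_rw [gcdDivLcmSum_apply, Nat.sum_divisors_prime_pow hp,
    gcd_div_lcm_pow_pow (Nat.cast_ne_zero.mpr hp.ne_zero), sum_range_sum_range_pow_dist,
    div_eq_mul_inv, inv_pow]

end GcdDivLcmSum

theorem gal_identity_general (b r : ℕ) (hb : 2 ≤ b) :
    ∑ m ∈ (∏ i ∈ Finset.range r, Nat.nth Nat.Prime i ^ (b - 1)).divisors,
      ∑ n ∈ (∏ i ∈ Finset.range r, Nat.nth Nat.Prime i ^ (b - 1)).divisors,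
        (Nat.gcd m n : ℝ) / (Nat.lcm m n : ℝ) =
    ∏ i ∈ Finset.range r,
      ((b : ℝ) + 2 * ∑ ν ∈ Finset.Icc 1 (b - 1),
        ((b : ℝ) - (ν : ℝ)) / (Nat.nth Nat.Prime i : ℝ) ^ ν) := by
  obtain ⟨k, rfl⟩ : ∃ k, b = k + 1 := ⟨b - 1, by omega⟩
  rw [← gcdDivLcmSum_apply, isMultiplicative_gcdDivLcmSum.map_prod _ _
    ((Nat.pairwise_coprime_nth_prime_pow _).set_pairwise _)]
  refine prod_congr rfl fun i _ => ?_
  rw [Nat.add_sub_cancel, gcdDivLcmSum_prime_pow (Nat.prime_nth_prime i)]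
  push_cast
  rfl

theorem gal_identity (b r : ℕ) (hb : 2 ≤ b) (hr : 1 ≤ r) :
    ∑ m ∈ (∏ i ∈ Finset.range r, Nat.nth Nat.Prime i ^ (b - 1)).divisors,
      ∑ n ∈ (∏ i ∈ Finset.range r, Nat.nth Nat.Prime i ^ (b - 1)).divisors,
        (Nat.gcd m n : ℝ) / (Nat.lcm m n : ℝ) =
    ∏ i ∈ Finset.range r,
      ((b : ℝ) + 2 * ∑ ν ∈ Finset.Icc 1 (b - 1),
        ((b : ℝ) - (ν : ℝ)) / (Nat.nth Nat.Prime i : ℝ) ^ ν) :=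
  gal_identity_general b r hb
end

section
/- Let b ≥ 2 and r ≥ 1 be integers, let p_1 < ... < p_r be the first r primes, and let M be the set of divisors of p_1^{b-1}⋯p_r^{b-1}. Then (1/|M|) ∑_{n ∈ M} ∑_{k | n} 1/k = ∏_{i=1}^{r} ( 1 + ∑_{ν=1}^{b-1} (1 - ν/b) p_i^{-ν} ). -/
/-!
`N ↦ ∑_{n ∣ N} ∑_{k ∣ n} 1/k` is the Dirichlet convolution `ζ * ζ * (1/·)`, hence multiplicative,
and so is the divisor count `σ₀`; both sides therefore factor over the prime powers `pᵢ^(b-1)`.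
In `∑_{a < b} ∑_{ν ≤ a} p^{-ν}` the term `p^{-ν}` occurs `b - ν` times, which gives
`b · (1 + ∑_{ν=1}^{b-1} (1 - ν/b) p^{-ν})` at each prime; the factors `b` cancel against `|M| = b^r`.
-/

open Finset

theorem Finset.sum_range_sum_range_succ_pow {R : Type*} [CommRing R] (x : R) (n : ℕ) :
    ∑ a ∈ range n, ∑ ν ∈ range (a + 1), x ^ ν = ∑ ν ∈ range n, ((n : R) - ν) * x ^ ν := by
  induction n with
  | zero => simp
  | succ n ih =>
    simp only [sum_range_succ _ n, ih, Nat.cast_succ, add_sub_right_comm, add_mul,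
      sum_add_distrib, one_mul]
    ring

theorem Finset.sum_range_sub_div_pow_eq {K : Type*} [Field K] [CharZero K] (x : K) (m : ℕ) :
    ∑ ν ∈ range (m + 1), ((m + 1 : K) - ν) / x ^ ν
      = (m + 1) * (1 + ∑ ν ∈ Icc 1 m, (1 - (ν : K) / (m + 1)) / x ^ ν) := by
  have hm : (m + 1 : K) ≠ 0 := Nat.cast_add_one_ne_zero m
  rw [sum_range_succ', ← Ico_add_one_right_eq_Icc, sum_Ico_eq_sum_range, Nat.add_sub_cancel,
    mul_add, mul_sum]
  simp only [Nat.cast_zero, sub_zero, pow_zero, div_one, mul_one, add_comm 1, Nat.cast_add,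
    Nat.cast_one]
  rw [add_comm]
  congr 1
  refine sum_congr rfl fun ν _ => ?_
  field_simp

namespace ArithmeticFunction

open scoped ArithmeticFunction.zeta

variable (K : Type*) [Semifield K]

def natInv : ArithmeticFunction K :=
  ⟨fun n => (n : K)⁻¹, by simp⟩

@[simp]
theorem natInv_apply (n : ℕ) : natInv K n = (n : K)⁻¹ := rfl

theorem isMultiplicative_natInv : (natInv K).IsMultiplicative :=
  ⟨by simp, fun _ => by simp [mul_comm]⟩

def iteratedInvDivisorSum : ArithmeticFunction K :=
  ((ζ : ArithmeticFunction ℕ) : ArithmeticFunction K) * (ζ * natInv K)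

theorem isMultiplicative_iteratedInvDivisorSum :
    (iteratedInvDivisorSum K).IsMultiplicative :=
  isMultiplicative_zeta.natCast.mul (isMultiplicative_zeta.natCast.mul (isMultiplicative_natInv K))

variable {K}

theorem iteratedInvDivisorSum_apply (N : ℕ) :
    iteratedInvDivisorSum K N = ∑ n ∈ N.divisors, ∑ k ∈ n.divisors, (1 : K) / k := by
  simp only [iteratedInvDivisorSum, coe_zeta_mul_apply, natInv_apply, one_div]

end ArithmeticFunction

theorem ArithmeticFunction.iteratedInvDivisorSum_prime_pow {K : Type*} [Field K] {p : ℕ}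
    (hp : p.Prime) (m : ℕ) :
    iteratedInvDivisorSum K (p ^ m) = ∑ ν ∈ range (m + 1), ((m + 1 : K) - ν) / (p : K) ^ ν := by
  simp only [iteratedInvDivisorSum_apply, Nat.sum_divisors_prime_pow hp, Nat.cast_pow, one_div,
    ← inv_pow]
  rw [sum_range_sum_range_succ_pow]
  simp [div_eq_mul_inv]

theorem Nat.pairwise_coprime_nth_prime_pow_s1 (s : Finset ℕ) (m : ℕ) :
    (s : Set ℕ).Pairwise (Function.onFun Nat.Coprime fun i => nth Prime i ^ m) :=
  fun i _ j _ hij => Nat.Coprime.pow _ _ <|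
    (Nat.coprime_primes (prime_nth_prime i) (prime_nth_prime j)).mpr
      ((nth_injective infinite_setOfPred_prime).ne hij)

theorem ArithmeticFunction.IsMultiplicative.map_prod_nth_prime_pow {R : Type*}
    [CommMonoidWithZero R] {f : ArithmeticFunction R} (hf : f.IsMultiplicative)
    (s : Finset ℕ) (m : ℕ) :
    f (∏ i ∈ s, Nat.nth Nat.Prime i ^ m) = ∏ i ∈ s, f (Nat.nth Nat.Prime i ^ m) :=
  hf.map_prod _ s (Nat.pairwise_coprime_nth_prime_pow_s1 s m)

open ArithmeticFunction in
theorem Nat.card_divisors_prod_nth_prime_pow (s : Finset ℕ) (m : ℕ) :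
    #(∏ i ∈ s, nth Prime i ^ m).divisors = (m + 1) ^ #s := by
  rw [← sigma_zero_apply, isMultiplicative_sigma.map_prod_nth_prime_pow]
  simp only [sigma_zero_apply_prime_pow (prime_nth_prime _), prod_const]

open ArithmeticFunction in
theorem avg_divisor_sum_general (b r : ℕ) (hb : 2 ≤ b) :
    (1 / ((∏ i ∈ Finset.range r, Nat.nth Nat.Prime i ^ (b - 1)).divisors.card : ℝ)) *
      ∑ n ∈ (∏ i ∈ Finset.range r, Nat.nth Nat.Prime i ^ (b - 1)).divisors,
        ∑ k ∈ n.divisors, (1 : ℝ) / (k : ℝ) =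
    ∏ i ∈ Finset.range r,
      (1 + ∑ ν ∈ Finset.Icc 1 (b - 1),
        (1 - (ν : ℝ) / (b : ℝ)) / (Nat.nth Nat.Prime i : ℝ) ^ ν) := by
  obtain ⟨m, rfl⟩ : ∃ m, b = m + 1 := ⟨b - 1, by omega⟩
  rw [Nat.add_sub_cancel, Nat.card_divisors_prod_nth_prime_pow, ← iteratedInvDivisorSum_apply,
    (isMultiplicative_iteratedInvDivisorSum ℝ).map_prod_nth_prime_pow]
  simp only [iteratedInvDivisorSum_prime_pow (Nat.prime_nth_prime _), sum_range_sub_div_pow_eq,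
    prod_mul_distrib, prod_const, card_range]
  push_cast
  field_simp

theorem avg_divisor_sum (b r : ℕ) (hb : 2 ≤ b) (hr : 1 ≤ r) :
    (1 / ((∏ i ∈ Finset.range r, Nat.nth Nat.Prime i ^ (b - 1)).divisors.card : ℝ)) *
      ∑ n ∈ (∏ i ∈ Finset.range r, Nat.nth Nat.Prime i ^ (b - 1)).divisors,
        ∑ k ∈ n.divisors, (1 : ℝ) / (k : ℝ) =
    ∏ i ∈ Finset.range r,
      (1 + ∑ ν ∈ Finset.Icc 1 (b - 1),
        (1 - (ν : ℝ) / (b : ℝ)) / (Nat.nth Nat.Prime i : ℝ) ^ ν) :=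
  avg_divisor_sum_general b r hb
end

section
/- Let b ≥ 2 and 1 ≤ m ≤ r be integers, let p_1 < ... < p_r be the first r primes, let M be the set of divisors of p_1^{b-1}⋯p_r^{b-1} and M_δ the set of divisors of p_1^{b-1}⋯p_m^{b-1}. Then (1/|M|) ∑_{n ∈ M} ∑_{k | n, k ∈ M_δ} 1/k = ∏_{i=1}^{m} ( 1 + ∑_{ν=1}^{b-1} (1 - ν/b) p_i^{-ν} ). -/
/-!
Write `P = Q * R` with `Q = ∏_{i ∈ s} p_i^a` and `R` the coprime complementary factor.
Swapping the two sums, each `k ∣ Q` is counted once for every divisor of `P / k`, and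
`τ(P / k) = τ(Q / k) τ(R)`; so the sum is `τ(R) h(Q)` for the multiplicative function
`h = (1/n) ∗ τ`, with `h(q^a) = ∑_{j ≤ a} (a + 1 - j) q^{-j}`, while `τ(P) = (a + 1)^|t|`.
-/

open Finset ArithmeticFunction
open scoped ArithmeticFunction.sigma ArithmeticFunction.zeta Function

namespace Nat

theorem card_filter_dvd_divisors {k P : ℕ} (hkP : k ∣ P) (hP : P ≠ 0) :
    #{n ∈ P.divisors | k ∣ n} = #(P / k).divisors := by
  obtain ⟨c, rfl⟩ := hkP
  have hk : 0 < k := Nat.pos_of_ne_zero (left_ne_zero_of_mul hP)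
  rw [Nat.mul_div_cancel_left c hk]
  refine card_nbij' (· / k) (k * ·) ?_ ?_ ?_ ?_
  · rintro n hn
    simp only [mem_coe, mem_filter, mem_divisors] at hn
    obtain ⟨⟨hnc, -⟩, j, rfl⟩ := hn
    simp only [mem_coe, mem_divisors]
    rw [Nat.mul_div_cancel_left j hk]
    exact ⟨(Nat.mul_dvd_mul_iff_left hk).1 hnc, right_ne_zero_of_mul hP⟩
  · intro d hd
    simp only [mem_coe, mem_divisors] at hd
    simp only [mem_coe, mem_filter, mem_divisors]
    exact ⟨⟨mul_dvd_mul_left k hd.1, hP⟩, dvd_mul_right k d⟩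
  · rintro n hn
    simp only [mem_coe, mem_filter] at hn
    exact Nat.mul_div_cancel' hn.2
  · intro d _
    exact Nat.mul_div_cancel_left d hk

theorem sum_divisors_sum_filter_mem_divisors {M : Type*} [AddCommMonoid M] {P Q : ℕ}
    (hQP : Q ∣ P) (hP : P ≠ 0) (f : ℕ → M) :
    ∑ n ∈ P.divisors, ∑ k ∈ n.divisors with k ∈ Q.divisors, f k =
      ∑ k ∈ Q.divisors, #(P / k).divisors • f k := by
  have hQ : Q ≠ 0 := ne_zero_of_dvd_ne_zero hP hQP
  rw [sum_comm' (t' := Q.divisors) (s' := fun k => {n ∈ P.divisors | k ∣ n})]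
  · refine sum_congr rfl fun k hk => ?_
    rw [sum_const, card_filter_dvd_divisors ((dvd_of_mem_divisors hk).trans hQP) hP]
  · intro n k
    simp only [mem_filter, mem_divisors]
    constructor
    · rintro ⟨⟨hnP, -⟩, ⟨hkn, hn⟩, hkQ, -⟩
      exact ⟨⟨⟨hnP, hP⟩, hkn⟩, hkQ, hQ⟩
    · rintro ⟨⟨⟨hnP, -⟩, hkn⟩, hkQ, -⟩
      exact ⟨⟨hnP, hP⟩, ⟨hkn, ne_zero_of_dvd_ne_zero hP hnP⟩, hkQ, hQ⟩

theorem card_divisors_mul_div {Q R k : ℕ} (hQR : Q.Coprime R) (hk : k ∣ Q) :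
    #(Q * R / k).divisors = #(Q / k).divisors * #R.divisors := by
  rw [← Nat.div_mul_right_comm hk,
    (Nat.Coprime.coprime_dvd_left (Nat.div_dvd_of_dvd hk) hQR).card_divisors_mul]

end Nat

namespace ArithmeticFunction

noncomputable def invConvSigmaZero : ArithmeticFunction ℝ :=
  (ζ : ArithmeticFunction ℝ).pdiv (ArithmeticFunction.id : ArithmeticFunction ℕ) *
    (σ 0 : ArithmeticFunction ℕ)

theorem invConvSigmaZero_apply (n : ℕ) :
    invConvSigmaZero n = ∑ k ∈ n.divisors, (#(n / k).divisors : ℝ) * (1 / k) := by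
  rw [invConvSigmaZero, mul_apply, Nat.sum_divisorsAntidiagonal fun i j =>
    ((ζ : ArithmeticFunction ℝ).pdiv (ArithmeticFunction.id : ArithmeticFunction ℕ)) i *
      (σ 0 : ArithmeticFunction ℝ) j]
  refine sum_congr rfl fun k hk => ?_
  rw [pdiv_apply, natCoe_apply, natCoe_apply, natCoe_apply, sigma_zero_apply,
    zeta_apply_ne (Nat.ne_of_gt (Nat.pos_of_mem_divisors hk)), id_apply, mul_comm]
  norm_num

theorem isMultiplicative_invConvSigmaZero : invConvSigmaZero.IsMultiplicative :=
  (isMultiplicative_zeta.natCast.pdiv isMultiplicative_id.natCast).mul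
    isMultiplicative_sigma.natCast

theorem invConvSigmaZero_prime_pow {q : ℕ} (hq : q.Prime) (a : ℕ) :
    invConvSigmaZero (q ^ a) =
      (a + 1) * (1 + ∑ ν ∈ Icc 1 a, (1 - (ν : ℝ) / (a + 1)) / (q : ℝ) ^ ν) := by
  have hterm : ∀ j ∈ range (a + 1),
      (#(q ^ a / q ^ j).divisors : ℝ) * (1 / ((q ^ j : ℕ) : ℝ)) = (a + 1 - j) / (q : ℝ) ^ j := by
    intro j hj
    have hja : j ≤ a := Nat.lt_succ_iff.1 (mem_range.1 hj)
    rw [Nat.pow_div hja hq.pos, ← sigma_zero_apply, sigma_zero_apply_prime_pow hq]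
    push_cast [hja]
    ring
  rw [invConvSigmaZero_apply, Nat.sum_divisors_prime_pow hq, sum_congr rfl hterm,
    range_eq_Ico, sum_eq_sum_Ico_succ_bot (by omega : 0 < a + 1), zero_add,
    Ico_add_one_right_eq_Icc, mul_add, mul_sum]
  have hq0 : (q : ℝ) ≠ 0 := by exact_mod_cast hq.ne_zero
  congr 1
  · simp
  · refine sum_congr rfl fun ν _ => ?_
    field_simp

end ArithmeticFunction

section PrimePowerProducts

variable {ι : Type*} {p : ι → ℕ}

theorem pairwise_coprime_pow_of_injective_prime (hp : ∀ i, (p i).Prime) (hinj : p.Injective)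
    (a : ℕ) (s : Set ι) : s.Pairwise (Nat.Coprime on fun i => p i ^ a) :=
  fun _ _ _ _ hij => ((Nat.coprime_primes (hp _) (hp _)).2 (hinj.ne hij)).pow a a

theorem coprime_prod_pow_of_disjoint (hp : ∀ i, (p i).Prime) (hinj : p.Injective) (a : ℕ)
    {s t : Finset ι} (hst : Disjoint s t) :
    (∏ i ∈ s, p i ^ a).Coprime (∏ i ∈ t, p i ^ a) :=
  Nat.Coprime.prod_left fun _ hi => Nat.Coprime.prod_right fun _ hj =>
    pairwise_coprime_pow_of_injective_prime hp hinj a Set.univ trivial trivial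
      fun hij => disjoint_left.1 hst hi (hij ▸ hj)

theorem card_divisors_prod_pow (hp : ∀ i, (p i).Prime) (hinj : p.Injective) (a : ℕ)
    (s : Finset ι) : #(∏ i ∈ s, p i ^ a).divisors = (a + 1) ^ #s := by
  rw [← sigma_zero_apply, isMultiplicative_sigma.map_prod _ s
    (pairwise_coprime_pow_of_injective_prime hp hinj a s)]
  simp only [sigma_zero_apply_prime_pow (hp _), prod_const]

theorem avg_restricted_divisor_sum_prod_prime_pow (hp : ∀ i, (p i).Prime)
    (hinj : p.Injective) (a : ℕ) {s t : Finset ι} (hst : s ⊆ t) :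
    (1 / (#(∏ i ∈ t, p i ^ a).divisors : ℝ)) *
      ∑ n ∈ (∏ i ∈ t, p i ^ a).divisors,
        ∑ k ∈ n.divisors with k ∈ (∏ i ∈ s, p i ^ a).divisors, (1 : ℝ) / k =
      ∏ i ∈ s, (1 + ∑ ν ∈ Icc 1 a, (1 - (ν : ℝ) / (a + 1)) / (p i : ℝ) ^ ν) := by
  classical
  set Q := ∏ i ∈ s, p i ^ a
  set R := ∏ i ∈ t \ s, p i ^ a
  have hP : ∏ i ∈ t, p i ^ a = Q * R := by rw [mul_comm, prod_sdiff hst]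
  have hQR : Q.Coprime R := coprime_prod_pow_of_disjoint hp hinj a disjoint_sdiff
  have hP0 : Q * R ≠ 0 := by
    rw [← hP]
    exact prod_ne_zero_iff.2 fun i _ => pow_ne_zero a (hp i).ne_zero
  have hsum : ∑ k ∈ Q.divisors, #(Q * R / k).divisors • ((1 : ℝ) / k) =
      #R.divisors * invConvSigmaZero Q := by
    rw [invConvSigmaZero_apply, mul_sum]
    refine sum_congr rfl fun k hk => ?_
    rw [nsmul_eq_mul, Nat.card_divisors_mul_div hQR (Nat.dvd_of_mem_divisors hk)]
    push_cast
    ring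
  rw [hP, Nat.sum_divisors_sum_filter_mem_divisors (dvd_mul_right Q R) hP0, hsum,
    isMultiplicative_invConvSigmaZero.map_prod _ s
      (pairwise_coprime_pow_of_injective_prime hp hinj a s),
    prod_congr rfl fun i _ => invConvSigmaZero_prime_pow (hp i) a, hQR.card_divisors_mul,
    card_divisors_prod_pow hp hinj, card_divisors_prod_pow hp hinj, prod_mul_distrib,
    prod_const]
  have ha : (a + 1 : ℝ) ≠ 0 := by positivity
  push_cast
  field_simp

end PrimePowerProducts

theorem avg_restricted_divisor_sum_general (b r m : ℕ) (hmr : m ≤ r) :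
    (1 / ((∏ i ∈ Finset.range r, Nat.nth Nat.Prime i ^ (b - 1)).divisors.card : ℝ)) *
      ∑ n ∈ (∏ i ∈ Finset.range r, Nat.nth Nat.Prime i ^ (b - 1)).divisors,
        ∑ k ∈ n.divisors.filter
          (fun k => k ∈ (∏ i ∈ Finset.range m, Nat.nth Nat.Prime i ^ (b - 1)).divisors),
          (1 : ℝ) / (k : ℝ) =
    ∏ i ∈ Finset.range m,
      (1 + ∑ ν ∈ Finset.Icc 1 (b - 1),
        (1 - (ν : ℝ) / (b : ℝ)) / (Nat.nth Nat.Prime i : ℝ) ^ ν) := by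
  rcases b with _ | a
  · -- `0 - 1 = 0` in `ℕ`, so both sides are `1`.
    simp [filter_eq']
  simpa using avg_restricted_divisor_sum_prod_prime_pow Nat.prime_nth_prime
    (Nat.nth_injective Nat.infinite_setOfPred_prime) a (range_subset_range.2 hmr)

theorem avg_restricted_divisor_sum (b r m : ℕ) (hb : 2 ≤ b) (hm : 1 ≤ m) (hmr : m ≤ r) :
    (1 / ((∏ i ∈ Finset.range r, Nat.nth Nat.Prime i ^ (b - 1)).divisors.card : ℝ)) *
      ∑ n ∈ (∏ i ∈ Finset.range r, Nat.nth Nat.Prime i ^ (b - 1)).divisors,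
        ∑ k ∈ n.divisors.filter
          (fun k => k ∈ (∏ i ∈ Finset.range m, Nat.nth Nat.Prime i ^ (b - 1)).divisors),
          (1 : ℝ) / (k : ℝ) =
    ∏ i ∈ Finset.range m,
      (1 + ∑ ν ∈ Finset.Icc 1 (b - 1),
        (1 - (ν : ℝ) / (b : ℝ)) / (Nat.nth Nat.Prime i : ℝ) ^ ν) :=
  avg_restricted_divisor_sum_general b r m hmr
end

section
/- Let ℓ be a positive integer and σ > 1. For every integer N ≥ 2 with N^{σ−1} ≥ e, the tail sum ∑_{n=N+1}^∞ (log n)^ℓ / n^σ is at most (ℓ+1) · ((σ−1) log N)^ℓ · N^{1−σ} · ℓ!/(σ−1)^{ℓ+1}. -/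
/-!
Write `f x = (log x)^ℓ / x^σ`. It increases up to `x = e^{ℓ/σ}` and decreases afterwards, so
comparing each term `f n` with the integral of `f` over `[n - 1, n]` costs in total at most the
peak value `f (e^{ℓ/σ}) = (ℓ/σ)^ℓ e^{-ℓ}`, and nothing once `N ≥ e^{ℓ/σ}`. With
`a = (σ - 1) log N ≥ 1`, the tail integral is `ℓ! N^{1-σ} e_ℓ(a) / (σ - 1)^{ℓ+1}`, where `e_ℓ` is
the degree-`ℓ` Taylor polynomial of `exp`, and `ℓ! e_ℓ(a) ≤ (ℓ ℓ! + 1) a^ℓ`. This leaves room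
`(ℓ! - 1) a^ℓ N^{1-σ} / (σ - 1)^{ℓ+1}` for the peak, and an elementary estimate using `N ≥ 2`
shows that the peak fits.
-/

open Real Set Filter Finset MeasureTheory Topology
open scoped Nat

section Unimodal

variable {f : ℝ → ℝ} {a p : ℝ}

lemma intervalIntegrable_of_monotoneOn_of_antitoneOn (hmono : MonotoneOn f (Icc a p))
    (hanti : AntitoneOn f (Ici p)) {x y : ℝ} (hax : a ≤ x) (hxy : x ≤ y) :
    IntervalIntegrable f volume x y := by
  have mono {u v : ℝ} (hau : a ≤ u) (huv : u ≤ v) (hvp : v ≤ p) :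
      IntervalIntegrable f volume u v :=
    (hmono.mono <| by rw [uIcc_of_le huv]; exact Icc_subset_Icc hau hvp).intervalIntegrable
  have anti {u v : ℝ} (hpu : p ≤ u) (huv : u ≤ v) : IntervalIntegrable f volume u v :=
    (hanti.mono <| by rw [uIcc_of_le huv]; exact Icc_subset_Ici_iff huv |>.2 hpu).intervalIntegrable
  rcases le_total y p with hyp | hpy
  · exact mono hax hxy hyp
  rcases le_total p x with hpx | hxp
  · exact anti hpx hxy
  · exact (mono hax hxp le_rfl).trans (anti le_rfl hpy)

/-- `f (min · p)` is the increasing envelope that pays for the terms left of the peak. -/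
lemma le_integral_add_of_monotoneOn_of_antitoneOn (hmono : MonotoneOn f (Icc a p))
    (hanti : AntitoneOn f (Ici p)) {x : ℝ} (hax : a ≤ x) :
    f (x + 1) ≤ (∫ t in x..x + 1, f t) + (f (min (x + 1) p) - f (min x p)) := by
  have hlow : ∀ t ∈ Icc x (x + 1), f (x + 1) - (f (min (x + 1) p) - f (min x p)) ≤ f t := by
    rintro t ⟨hxt, htx⟩
    have mono {u v : ℝ} (hau : a ≤ u) (huv : u ≤ v) (hvp : v ≤ p) : f u ≤ f v :=
      hmono ⟨hau, huv.trans hvp⟩ ⟨hau.trans huv, hvp⟩ huv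
    have anti {u v : ℝ} (hpu : p ≤ u) (huv : u ≤ v) : f v ≤ f u :=
      hanti hpu (hpu.trans huv) huv
    rcases le_total (x + 1) p with hxp | hpx
    · rw [min_eq_left hxp, min_eq_left (by linarith)]
      linarith [mono hax hxt (htx.trans hxp)]
    rcases le_total p x with hpx' | hxp
    · rw [min_eq_right hpx, min_eq_right hpx']
      linarith [anti (hpx'.trans hxt) htx]
    rw [min_eq_right hpx, min_eq_left hxp]
    rcases le_total t p with htp | hpt
    · linarith [mono hax hxt htp, anti le_rfl hpx]
    · linarith [anti hpt htx, mono hax hxp le_rfl]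
  have := intervalIntegral.integral_mono_on (by linarith) intervalIntegrable_const
    (intervalIntegrable_of_monotoneOn_of_antitoneOn hmono hanti hax (by linarith)) hlow
  simp only [intervalIntegral.integral_const, add_sub_cancel_left, one_smul] at this
  linarith

theorem sum_le_integral_add_of_monotoneOn_of_antitoneOn (hmono : MonotoneOn f (Icc a p))
    (hanti : AntitoneOn f (Ici p)) (k : ℕ) :
    ∑ i ∈ range k, f (a + (i + 1 : ℕ)) ≤
      (∫ x in a..a + k, f x) + (f (min (a + k) p) - f (min a p)) := by
  have hx (i : ℕ) : a ≤ a + i := le_add_of_nonneg_right i.cast_nonneg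
  calc ∑ i ∈ range k, f (a + (i + 1 : ℕ))
      ≤ ∑ i ∈ range k, ((∫ t in a + i..a + (i + 1 : ℕ), f t) +
          (f (min (a + (i + 1 : ℕ)) p) - f (min (a + i) p))) := by
        refine sum_le_sum fun i _ ↦ ?_
        simpa only [Nat.cast_succ, add_assoc] using
          le_integral_add_of_monotoneOn_of_antitoneOn hmono hanti (hx i)
    _ = (∫ x in a..a + k, f x) + (f (min (a + k) p) - f (min a p)) := by
        rw [sum_add_distrib, sum_range_sub (fun i ↦ f (min (a + i) p)),
          intervalIntegral.sum_integral_adjacent_intervals (a := fun i : ℕ ↦ a + i)]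
        · simp
        · intro i _
          exact intervalIntegrable_of_monotoneOn_of_antitoneOn hmono hanti (hx i) (by simp)

end Unimodal

section PowMulExpNeg

variable (ℓ : ℕ)

lemma hasDerivAt_pow_mul_exp_neg (t : ℝ) :
    HasDerivAt (fun t ↦ t ^ ℓ * exp (-t)) ((ℓ * t ^ (ℓ - 1) - t ^ ℓ) * exp (-t)) t :=
  ((hasDerivAt_pow ℓ t).fun_mul (hasDerivAt_neg t).exp).congr_deriv (by ring)

lemma pow_mul_exp_neg_monotoneOn : MonotoneOn (fun t : ℝ ↦ t ^ ℓ * exp (-t)) (Icc 0 ℓ) := by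
  refine monotoneOn_of_deriv_nonneg (convex_Icc _ _) (by fun_prop) (by fun_prop) fun t ht ↦ ?_
  rw [interior_Icc] at ht
  obtain ⟨m, rfl⟩ : ∃ m, ℓ = m + 1 := Nat.exists_eq_add_one.2 (by exact_mod_cast ht.1.trans ht.2)
  rw [(hasDerivAt_pow_mul_exp_neg _ t).deriv, Nat.add_sub_cancel, pow_succ]
  have : t < (m + 1 : ℕ) := ht.2
  push_cast at this ⊢
  exact mul_nonneg (by nlinarith [pow_pos ht.1 m]) (exp_pos _).le

lemma pow_mul_exp_neg_antitoneOn : AntitoneOn (fun t : ℝ ↦ t ^ ℓ * exp (-t)) (Ici ℓ) := by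
  refine antitoneOn_of_deriv_nonpos (convex_Ici _) (by fun_prop) (by fun_prop) fun t ht ↦ ?_
  rw [interior_Ici] at ht
  have ht0 : 0 < t := lt_of_le_of_lt ℓ.cast_nonneg ht
  rw [(hasDerivAt_pow_mul_exp_neg _ t).deriv]
  refine mul_nonpos_of_nonpos_of_nonneg ?_ (exp_pos _).le
  rcases ℓ with _ | m
  · simp
  · rw [Nat.add_sub_cancel, pow_succ]
    have : ((m + 1 : ℕ) : ℝ) < t := ht
    push_cast at this ⊢
    nlinarith [pow_pos ht0 m]

lemma pow_mul_exp_neg_le {t : ℝ} (ht : 0 ≤ t) : t ^ ℓ * exp (-t) ≤ ℓ ^ ℓ * exp (-ℓ) := by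
  rcases le_total t ℓ with htℓ | hℓt
  · exact pow_mul_exp_neg_monotoneOn ℓ ⟨ht, htℓ⟩ ⟨ℓ.cast_nonneg, le_rfl⟩ htℓ
  · exact pow_mul_exp_neg_antitoneOn ℓ (mem_Ici.2 le_rfl) hℓt hℓt

end PowMulExpNeg

section LogPowDivRpow

variable (ℓ : ℕ) {σ : ℝ}

lemma log_pow_div_rpow_eq (hσ : σ ≠ 0) {x : ℝ} (hx : 0 < x) :
    log x ^ ℓ / x ^ σ = (σ * log x) ^ ℓ * exp (-(σ * log x)) / σ ^ ℓ := by
  rw [rpow_def_of_pos hx, exp_neg, mul_pow, mul_comm (log x)]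
  field_simp

lemma log_pow_div_rpow_nonneg {x : ℝ} (hx : 1 ≤ x) : 0 ≤ log x ^ ℓ / x ^ σ :=
  div_nonneg (pow_nonneg (log_nonneg hx) ℓ) (rpow_nonneg (zero_le_one.trans hx) σ)

lemma log_pow_div_rpow_monotoneOn (hσ : 0 < σ) :
    MonotoneOn (fun x ↦ log x ^ ℓ / x ^ σ) (Icc 1 (exp (ℓ / σ))) := by
  intro x hx y hy hxy
  have hx0 : 0 < x := zero_lt_one.trans_le hx.1
  have hy0 : 0 < y := zero_lt_one.trans_le hy.1
  have mem {z : ℝ} (hz : z ∈ Icc 1 (exp (ℓ / σ))) : σ * log z ∈ Icc 0 (ℓ : ℝ) := by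
    refine ⟨mul_nonneg hσ.le (log_nonneg hz.1), ?_⟩
    have := log_le_log (zero_lt_one.trans_le hz.1) hz.2
    rw [log_exp, le_div_iff₀ hσ] at this
    linarith
  simp only [log_pow_div_rpow_eq ℓ hσ.ne' hx0, log_pow_div_rpow_eq ℓ hσ.ne' hy0]
  exact div_le_div_of_nonneg_right
    (pow_mul_exp_neg_monotoneOn ℓ (mem hx) (mem hy) (by gcongr)) (by positivity)

lemma log_pow_div_rpow_antitoneOn (hσ : 0 < σ) :
    AntitoneOn (fun x ↦ log x ^ ℓ / x ^ σ) (Ici (exp (ℓ / σ))) := by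
  intro x hx y hy hxy
  have hx0 : 0 < x := (exp_pos _).trans_le hx
  have hy0 : 0 < y := (exp_pos _).trans_le hy
  have mem {z : ℝ} (hz : exp (ℓ / σ) ≤ z) : σ * log z ∈ Ici (ℓ : ℝ) := by
    have := log_le_log (exp_pos _) hz
    rw [log_exp, div_le_iff₀ hσ] at this
    exact mem_Ici.2 (by linarith)
  simp only [log_pow_div_rpow_eq ℓ hσ.ne' hx0, log_pow_div_rpow_eq ℓ hσ.ne' hy0]
  exact div_le_div_of_nonneg_right
    (pow_mul_exp_neg_antitoneOn ℓ (mem hx) (mem hy) (by gcongr)) (by positivity)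

lemma log_pow_div_rpow_le (hσ : 0 < σ) {x : ℝ} (hx : 1 ≤ x) :
    log x ^ ℓ / x ^ σ ≤ (ℓ / σ) ^ ℓ * exp (-ℓ) := by
  rw [log_pow_div_rpow_eq ℓ hσ.ne' (zero_lt_one.trans_le hx), div_pow, div_mul_eq_mul_div]
  exact div_le_div_of_nonneg_right
    (pow_mul_exp_neg_le ℓ (mul_nonneg hσ.le (log_nonneg hx))) (by positivity)

end LogPowDivRpow

/-- The degree-`ℓ` Taylor polynomial of `exp`; `ℓ! e^{-u} expPartialSum ℓ u` is the incomplete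
Gamma function `Γ(ℓ + 1, u)`. -/
noncomputable def expPartialSum (ℓ : ℕ) (u : ℝ) : ℝ := ∑ k ∈ range (ℓ + 1), u ^ k / k !

lemma hasDerivAt_expPartialSum (ℓ : ℕ) (u : ℝ) :
    HasDerivAt (expPartialSum ℓ) (expPartialSum ℓ u - u ^ ℓ / ℓ !) u := by
  induction ℓ with
  | zero =>
    have : expPartialSum 0 = fun _ ↦ 1 := by ext; simp [expPartialSum]
    simpa [this] using hasDerivAt_const u (1 : ℝ)
  | succ ℓ ih =>
    have hsucc : expPartialSum (ℓ + 1) = fun u ↦ expPartialSum ℓ u + u ^ (ℓ + 1) / (ℓ + 1)! := by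
      ext u; simp [expPartialSum, sum_range_succ _ (ℓ + 1)]
    rw [hsucc]
    refine (ih.add ((hasDerivAt_pow (ℓ + 1) u).div_const _)).congr_deriv ?_
    rw [Nat.factorial_succ, Nat.add_sub_cancel]
    push_cast
    field_simp
    ring

lemma hasDerivAt_exp_neg_mul_expPartialSum (ℓ : ℕ) (u : ℝ) :
    HasDerivAt (fun u ↦ exp (-u) * expPartialSum ℓ u) (-(u ^ ℓ * exp (-u)) / ℓ !) u :=
  ((hasDerivAt_neg u).exp.fun_mul (hasDerivAt_expPartialSum ℓ u)).congr_deriv (by ring)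

lemma tendsto_exp_neg_mul_expPartialSum (ℓ : ℕ) :
    Tendsto (fun u ↦ exp (-u) * expPartialSum ℓ u) atTop (𝓝 0) := by
  have := tendsto_finsetSum (range (ℓ + 1)) fun k _ ↦
    (tendsto_pow_mul_exp_neg_atTop_nhds_zero k).div_const (k ! : ℝ)
  simp only [zero_div, sum_const_zero] at this
  refine this.congr fun u ↦ ?_
  simp only [expPartialSum, mul_sum]
  exact sum_congr rfl fun k _ ↦ by ring

lemma factorial_mul_expPartialSum_le (ℓ : ℕ) {u : ℝ} (hu : 1 ≤ u) :
    ℓ ! * expPartialSum ℓ u ≤ (ℓ * ℓ ! + 1) * u ^ ℓ := by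
  have hterm : ∀ k ∈ range ℓ, (ℓ ! : ℝ) * (u ^ k / k !) ≤ ℓ ! * u ^ ℓ := fun k hk ↦ by
    gcongr
    exact (div_le_self (by positivity) (mod_cast k.factorial_pos)).trans
      (pow_le_pow_right₀ hu (mem_range.1 hk).le)
  have hlast : (ℓ ! : ℝ) * (u ^ ℓ / ℓ !) = u ^ ℓ := by field_simp
  rw [expPartialSum, sum_range_succ, mul_add, mul_sum, hlast]
  have := sum_le_sum hterm
  rw [sum_const, card_range, nsmul_eq_mul] at this
  linarith

section IntegralLogPowDivRpow

variable (ℓ : ℕ) {σ : ℝ}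

lemma hasDerivAt_log_pow_div_rpow_primitive (hσ : 1 < σ) {x : ℝ} (hx : 0 < x) :
    HasDerivAt (fun x ↦ -(ℓ ! / (σ - 1) ^ (ℓ + 1)) *
        (exp (-((σ - 1) * log x)) * expPartialSum ℓ ((σ - 1) * log x)))
      (log x ^ ℓ / x ^ σ) x := by
  have hinner : HasDerivAt (fun x ↦ (σ - 1) * log x) ((σ - 1) * x⁻¹) x :=
    (hasDerivAt_log hx.ne').const_mul _
  refine (((hasDerivAt_exp_neg_mul_expPartialSum ℓ _).comp x hinner).const_mul _).congr_deriv ?_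
  have hxσ : x ^ σ = x * exp ((σ - 1) * log x) := by
    rw [rpow_def_of_pos hx, ← exp_log hx, ← exp_add, log_exp]
    ring_nf
  have : σ - 1 ≠ 0 := by linarith
  rw [hxσ, exp_neg, mul_pow]
  field_simp
  ring

lemma tendsto_log_pow_div_rpow_primitive (hσ : 1 < σ) :
    Tendsto (fun x ↦ -(ℓ ! / (σ - 1) ^ (ℓ + 1)) *
        (exp (-((σ - 1) * log x)) * expPartialSum ℓ ((σ - 1) * log x))) atTop (𝓝 0) := by
  simpa using ((tendsto_exp_neg_mul_expPartialSum ℓ).comp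
    (tendsto_log_atTop.const_mul_atTop (sub_pos.2 hσ))).const_mul (-(ℓ ! / (σ - 1) ^ (ℓ + 1)))

lemma integrableOn_log_pow_div_rpow_Ioi (hσ : 1 < σ) {c : ℝ} (hc : 1 ≤ c) :
    IntegrableOn (fun x ↦ log x ^ ℓ / x ^ σ) (Ioi c) :=
  integrableOn_Ioi_deriv_of_nonneg'
    (fun x hx ↦ hasDerivAt_log_pow_div_rpow_primitive ℓ hσ (by linarith [mem_Ici.1 hx]))
    (fun x hx ↦ log_pow_div_rpow_nonneg ℓ (hc.trans (mem_Ioi.1 hx).le))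
    (tendsto_log_pow_div_rpow_primitive ℓ hσ)

lemma integral_log_pow_div_rpow_Ioi (hσ : 1 < σ) {c : ℝ} (hc : 1 ≤ c) :
    ∫ x in Ioi c, log x ^ ℓ / x ^ σ =
      ℓ ! * c ^ (1 - σ) * expPartialSum ℓ ((σ - 1) * log c) / (σ - 1) ^ (ℓ + 1) := by
  rw [integral_Ioi_of_hasDerivAt_of_nonneg'
    (fun x hx ↦ hasDerivAt_log_pow_div_rpow_primitive ℓ hσ (by linarith [mem_Ici.1 hx]))
    (fun x hx ↦ log_pow_div_rpow_nonneg ℓ (hc.trans (mem_Ioi.1 hx).le))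
    (tendsto_log_pow_div_rpow_primitive ℓ hσ),
    rpow_def_of_pos (by linarith)]
  ring_nf

end IntegralLogPowDivRpow

lemma add_one_pow_le_exp_one_mul_pow (n : ℕ) : ((n : ℝ) + 1) ^ n ≤ exp 1 * n ^ n := by
  rcases n.eq_zero_or_pos with rfl | hn
  · simp
  have hn' : (0 : ℝ) < n := by exact_mod_cast hn
  calc ((n : ℝ) + 1) ^ n = (1 + (n : ℝ)⁻¹) ^ n * n ^ n := by
        rw [← mul_pow]; congr 1; field_simp
    _ ≤ exp 1 * n ^ n := by gcongr; exact one_add_inv_pow_le_exp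

/-- Only `ℓ = 2, 3` need numerics: for `n ≥ 3`, passing from `n` to `n + 1` multiplies the right
side at least as much as the left, since `(n + 1)^n ≤ e n^n` and
`n + 1 - log 2 ≤ (1 + log 2) (n - log 2)`. -/
lemma two_mul_exp_one_mul_pow_self_le_factorial_mul (ℓ : ℕ) (hℓ : 2 ≤ ℓ) :
    2 * exp 1 * (ℓ - log 2) * ℓ ^ ℓ ≤ ℓ ! * log 2 * (exp 1 * (1 + log 2)) ^ ℓ := by
  have hL₀ := log_two_gt_d9
  have hL₁ := log_two_lt_d9
  have he₀ := exp_one_gt_d9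
  induction ℓ, hℓ using Nat.le_induction with
  | base =>
    suffices 4 * (2 - log 2) ≤ log 2 * exp 1 * (1 + log 2) ^ 2 by
      norm_num [Nat.factorial]; nlinarith
    calc 4 * (2 - log 2) ≤ 4 * (2 - 0.6931471803) := by linarith
      _ ≤ 0.6931471803 * 2.7182818283 * (1 + 0.6931471803) ^ 2 := by norm_num
      _ ≤ log 2 * exp 1 * (1 + log 2) ^ 2 := by gcongr
  | succ n hn ih =>
    rcases hn.eq_or_lt with rfl | hn
    · suffices 9 * (3 - log 2) ≤ log 2 * exp 1 ^ 2 * (1 + log 2) ^ 3 by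
        norm_num [Nat.factorial]; nlinarith
      calc 9 * (3 - log 2) ≤ 9 * (3 - 0.6931471803) := by linarith
        _ ≤ 0.6931471803 * 2.7182818283 ^ 2 * (1 + 0.6931471803) ^ 3 := by norm_num
        _ ≤ log 2 * exp 1 ^ 2 * (1 + log 2) ^ 3 := by gcongr
    have hn3 : (3 : ℝ) ≤ n := by exact_mod_cast hn
    have hshift : (n : ℝ) + 1 - log 2 ≤ (1 + log 2) * (n - log 2) := by nlinarith
    push_cast
    calc 2 * exp 1 * ((n : ℝ) + 1 - log 2) * ((n : ℝ) + 1) ^ (n + 1)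
        = ((n : ℝ) + 1) ^ n * ((n + 1) * (2 * exp 1 * ((n : ℝ) + 1 - log 2))) := by ring
      _ ≤ (exp 1 * n ^ n) * ((n + 1) * (2 * exp 1 * ((1 + log 2) * (n - log 2)))) := by
        gcongr
        · exact mul_nonneg (by positivity) (mul_nonneg (by positivity) (by linarith))
        · exact add_one_pow_le_exp_one_mul_pow n
      _ = exp 1 * (1 + log 2) * (n + 1) * (2 * exp 1 * (n - log 2) * n ^ n) := by ring
      _ ≤ exp 1 * (1 + log 2) * (n + 1) * (n ! * log 2 * (exp 1 * (1 + log 2)) ^ n) := by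
        gcongr
      _ = (n + 1 : ℕ)! * log 2 * (exp 1 * (1 + log 2)) ^ (n + 1) := by
        push_cast [Nat.factorial_succ]; ring

/-- The peak value `(ℓ/σ)^ℓ e^{-ℓ}` fits into the slack `(ℓ! - 1) a^ℓ e^{-a}`, `a = (σ - 1) t`:
write `a^ℓ e^{-a} = ((σ - 1)/σ)^ℓ (σt)^ℓ e^{-σt} e^t`; unimodality gives
`(σt)^ℓ e^{-σt} ≥ (1 + log 2)^ℓ e^{-1 - log 2}`, and `e^t ≥ 2`. -/
lemma sub_one_pow_succ_mul_peak_le {ℓ : ℕ} {σ t : ℝ} (hσ : 1 < σ) (ht : log 2 ≤ t)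
    (ha : 1 ≤ (σ - 1) * t) (hpeak : σ * t < ℓ) :
    (σ - 1) ^ (ℓ + 1) * ((ℓ / σ) ^ ℓ * exp (-ℓ)) ≤
      ((ℓ ! : ℝ) - 1) * (((σ - 1) * t) ^ ℓ * exp (-((σ - 1) * t))) := by
  have hL : 0 < log 2 := log_pos one_lt_two
  have hσt : 1 + log 2 ≤ σ * t := by linarith
  have hℓ : 2 ≤ ℓ := by
    have : (1 : ℝ) < ℓ := by linarith
    exact_mod_cast this
  have hfac : (ℓ ! : ℝ) / 2 ≤ (ℓ ! : ℝ) - 1 := by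
    have : (2 : ℝ) ≤ ℓ ! := by exact_mod_cast Nat.factorial_le hℓ
    linarith
  have hφ : 0 ≤ (σ * t) ^ ℓ * exp (-(σ * t)) :=
    mul_nonneg (pow_nonneg (by linarith) ℓ) (exp_pos _).le
  have hsL : (σ - 1) * log 2 ≤ ℓ - log 2 := by nlinarith
  have hcore : (σ - 1) * (ℓ ^ ℓ * exp (-ℓ)) ≤ ℓ ! / 2 * ((1 + log 2) ^ ℓ * exp (-1)) := by
    rw [exp_neg, exp_neg, ← exp_one_pow]
    calc (σ - 1) * (ℓ ^ ℓ * (exp 1 ^ ℓ)⁻¹)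
        ≤ (ℓ - log 2) / log 2 * (ℓ ^ ℓ * (exp 1 ^ ℓ)⁻¹) := by
          gcongr; rwa [le_div_iff₀ hL]
      _ = 2 * exp 1 * (ℓ - log 2) * ℓ ^ ℓ / (2 * exp 1 * log 2 * exp 1 ^ ℓ) := by
          field_simp
      _ ≤ ℓ ! * log 2 * (exp 1 * (1 + log 2)) ^ ℓ / (2 * exp 1 * log 2 * exp 1 ^ ℓ) := by
          exact div_le_div_of_nonneg_right
            (two_mul_exp_one_mul_pow_self_le_factorial_mul ℓ hℓ) (by positivity)
      _ = ℓ ! / 2 * ((1 + log 2) ^ ℓ * (exp 1)⁻¹) := by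
          rw [mul_pow]; field_simp
  have hpow : (1 + log 2) ^ ℓ * exp (-1) ≤ ((σ * t) ^ ℓ * exp (-(σ * t))) * exp t := by
    have hmono := pow_mul_exp_neg_monotoneOn ℓ ⟨by positivity, by linarith⟩
      ⟨by linarith, hpeak.le⟩ hσt
    have h2 : 2 ≤ exp t := by simpa [exp_log two_pos] using exp_le_exp.2 ht
    calc (1 + log 2) ^ ℓ * exp (-1) = ((1 + log 2) ^ ℓ * exp (-(1 + log 2))) * 2 := by
          rw [neg_add, exp_add, exp_neg (log 2), exp_log two_pos]; ring
      _ ≤ ((σ * t) ^ ℓ * exp (-(σ * t))) * exp t := mul_le_mul hmono h2 two_pos.le hφ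
  calc (σ - 1) ^ (ℓ + 1) * ((ℓ / σ) ^ ℓ * exp (-ℓ))
      = ((σ - 1) / σ) ^ ℓ * ((σ - 1) * (ℓ ^ ℓ * exp (-ℓ))) := by
        rw [div_pow, div_pow, pow_succ]; ring
    _ ≤ ((σ - 1) / σ) ^ ℓ * (ℓ ! / 2 * (((σ * t) ^ ℓ * exp (-(σ * t))) * exp t)) := by
        exact mul_le_mul_of_nonneg_left
          (hcore.trans (mul_le_mul_of_nonneg_left hpow (by positivity))) (by positivity)
    _ = ℓ ! / 2 * (((σ - 1) * t) ^ ℓ * exp (-((σ - 1) * t))) := by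
        have hexp : exp (-(σ * t)) * exp t = exp (-((σ - 1) * t)) := by
          rw [← exp_add]; ring_nf
        rw [← hexp, div_pow, mul_pow, mul_pow]
        field_simp
    _ ≤ ((ℓ ! : ℝ) - 1) * (((σ - 1) * t) ^ ℓ * exp (-((σ - 1) * t))) := by gcongr

section TailSum

variable {ℓ : ℕ} {σ c : ℝ}

lemma log_pow_div_rpow_peak_excess_le (hσ : 1 < σ) (hc : 2 ≤ c) (ha : 1 ≤ (σ - 1) * log c)
    {x : ℝ} (hx : c ≤ x) :
    log (min x (exp (ℓ / σ))) ^ ℓ / min x (exp (ℓ / σ)) ^ σ -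
        log (min c (exp (ℓ / σ))) ^ ℓ / min c (exp (ℓ / σ)) ^ σ ≤
      ((ℓ ! : ℝ) - 1) * ((σ - 1) * log c) ^ ℓ * c ^ (1 - σ) / (σ - 1) ^ (ℓ + 1) := by
  have hfac : (1 : ℝ) ≤ ℓ ! := mod_cast ℓ.factorial_pos
  rcases le_or_gt (exp (ℓ / σ)) c with hpc | hcp
  · rw [min_eq_right hpc, min_eq_right (hpc.trans hx), sub_self]
    have : 0 ≤ log c := log_nonneg (by linarith)
    have : 0 ≤ c ^ (1 - σ) := rpow_nonneg (by linarith) _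
    have : (0 : ℝ) ≤ (ℓ ! : ℝ) - 1 := by linarith
    positivity
  have hpeak : σ * log c < ℓ := by
    have := log_lt_log (by linarith) hcp
    rwa [log_exp, lt_div_iff₀ (by linarith), mul_comm] at this
  have hcpow : c ^ (1 - σ) = exp (-((σ - 1) * log c)) := by
    rw [rpow_def_of_pos (by linarith)]; ring_nf
  rw [min_eq_left hcp.le, hcpow, le_div_iff₀ (by positivity), mul_assoc _ (_ ^ ℓ)]
  have hmax := log_pow_div_rpow_le ℓ (by linarith : 0 < σ) (le_min (by linarith) (one_le_exp
    (by positivity)) : 1 ≤ min x (exp (ℓ / σ)))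
  have hc0 := log_pow_div_rpow_nonneg (σ := σ) ℓ (by linarith : 1 ≤ c)
  calc (log (min x (exp (ℓ / σ))) ^ ℓ / min x (exp (ℓ / σ)) ^ σ - log c ^ ℓ / c ^ σ) *
        (σ - 1) ^ (ℓ + 1)
      ≤ (σ - 1) ^ (ℓ + 1) * ((ℓ / σ) ^ ℓ * exp (-ℓ)) := by
        rw [mul_comm]; gcongr; linarith
    _ ≤ _ := sub_one_pow_succ_mul_peak_le hσ (log_le_log two_pos hc) ha hpeak

theorem sum_range_log_pow_div_rpow_le (hσ : 1 < σ) (hc : 2 ≤ c) (ha : 1 ≤ (σ - 1) * log c)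
    (k : ℕ) :
    ∑ i ∈ range k, log (c + (i + 1 : ℕ)) ^ ℓ / (c + (i + 1 : ℕ)) ^ σ ≤
      (ℓ + 1) * ((σ - 1) * log c) ^ ℓ * c ^ (1 - σ) * (ℓ ! / (σ - 1) ^ (ℓ + 1)) := by
  have hσ₀ : 0 < σ := by linarith
  have hc₁ : 1 ≤ c := by linarith
  have hmono := (log_pow_div_rpow_monotoneOn ℓ hσ₀).mono (Icc_subset_Icc_left hc₁)
  have hsum := sum_le_integral_add_of_monotoneOn_of_antitoneOn hmono
    (log_pow_div_rpow_antitoneOn ℓ hσ₀) k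
  have hint : ∫ x in c..c + k, log x ^ ℓ / x ^ σ ≤ ∫ x in Ioi c, log x ^ ℓ / x ^ σ := by
    rw [intervalIntegral.integral_of_le (by simp)]
    refine setIntegral_mono_set (integrableOn_log_pow_div_rpow_Ioi ℓ hσ hc₁) ?_
      Ioc_subset_Ioi_self.eventuallyLE
    exact ae_restrict_of_forall_mem measurableSet_Ioi fun x hx ↦
      log_pow_div_rpow_nonneg ℓ (hc₁.trans (mem_Ioi.1 hx).le)
  have hpoly := factorial_mul_expPartialSum_le ℓ ha
  calc _ ≤ (∫ x in Ioi c, log x ^ ℓ / x ^ σ) +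
          ((ℓ ! : ℝ) - 1) * ((σ - 1) * log c) ^ ℓ * c ^ (1 - σ) / (σ - 1) ^ (ℓ + 1) := by
        linarith [log_pow_div_rpow_peak_excess_le (ℓ := ℓ) hσ hc ha
          (le_add_of_nonneg_right k.cast_nonneg)]
    _ = (ℓ ! * expPartialSum ℓ ((σ - 1) * log c) + ((ℓ ! : ℝ) - 1) * ((σ - 1) * log c) ^ ℓ) *
          (c ^ (1 - σ) / (σ - 1) ^ (ℓ + 1)) := by
        rw [integral_log_pow_div_rpow_Ioi ℓ hσ hc₁]; ring
    _ ≤ ((ℓ * ℓ ! + 1) * ((σ - 1) * log c) ^ ℓ + ((ℓ ! : ℝ) - 1) * ((σ - 1) * log c) ^ ℓ) *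
          (c ^ (1 - σ) / (σ - 1) ^ (ℓ + 1)) := by gcongr
    _ = _ := by ring

end TailSum

theorem tail_sum_log_pow_upper_general (ℓ : ℕ) (σ : ℝ) (hσ : 1 < σ)
    (N : ℕ) (hN : 2 ≤ N) (hNe : Real.exp 1 ≤ (N : ℝ) ^ (σ - 1)) :
    (∑' n : ℕ, if N + 1 ≤ n then (Real.log n) ^ ℓ / (n : ℝ) ^ σ else 0) ≤
      ((ℓ : ℝ) + 1) * ((σ - 1) * Real.log N) ^ ℓ * (N : ℝ) ^ (1 - σ) *
        ((Nat.factorial ℓ : ℝ) / (σ - 1) ^ (ℓ + 1)) := by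
  have hN' : (2 : ℝ) ≤ N := mod_cast hN
  have ha : 1 ≤ (σ - 1) * log N := by
    simpa [log_rpow (by linarith : (0 : ℝ) < N)] using log_le_log (exp_pos 1) hNe
  refine Real.tsum_le_of_sum_range_le (fun n ↦ ?_) fun K ↦ ?_
  · split_ifs with hn
    · exact log_pow_div_rpow_nonneg ℓ (by exact_mod_cast (by omega : 1 ≤ n))
    · exact le_rfl
  rw [← sum_filter, range_eq_Ico, Ico_filter_le, max_eq_right (Nat.zero_le _), sum_Ico_eq_sum_range]
  refine le_of_eq_of_le (sum_congr rfl fun i _ ↦ ?_) (sum_range_log_pow_div_rpow_le hσ hN' ha _)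
  push_cast
  ring_nf

theorem tail_sum_log_pow_upper (ℓ : ℕ) (hℓ : 1 ≤ ℓ) (σ : ℝ) (hσ : 1 < σ)
    (N : ℕ) (hN : 2 ≤ N) (hNe : Real.exp 1 ≤ (N : ℝ) ^ (σ - 1)) :
    (∑' n : ℕ, if N + 1 ≤ n then (Real.log n) ^ ℓ / (n : ℝ) ^ σ else 0) ≤
      ((ℓ : ℝ) + 1) * ((σ - 1) * Real.log N) ^ ℓ * (N : ℝ) ^ (1 - σ) *
        ((Nat.factorial ℓ : ℝ) / (σ - 1) ^ (ℓ + 1)) :=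
  tail_sum_log_pow_upper_general ℓ σ hσ N hN hNe
end

section
/- For every positive integer N and every positive integer q ≥ 2, there exists a real number t ∈ [1, q^N] such that cos(t log n) ≥ cos(2π/q) for all integers n with 1 ≤ n ≤ N. -/
/-!
Write `x n = log n / (2π)`. By pigeonhole on the `q ^ N` cubes of side `1 / q` in `[0, 1) ^ N`,
two of the points `(fract (j * x n))ₙ`, `0 ≤ j ≤ q ^ N`, share a cube; their difference
`t = k - j` brings every `t * x n` within `1 / q` of an integer (Dirichlet's simultaneous
approximation), so every `t * log n` lies within `2π / q ≤ π` of a multiple of `2π`.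
-/

open Real Finset

lemma abs_sub_lt_one_div_of_floor_mul_eq {q : ℕ} (hq : 0 < q) {a b : ℝ} (ha : 0 ≤ a)
    (hb : 0 ≤ b) (h : ⌊q * a⌋₊ = ⌊q * b⌋₊) : |a - b| < 1 / q := by
  have hq' : (0 : ℝ) < q := by exact_mod_cast hq
  have hfloor : ⌊q * a⌋ = ⌊q * b⌋ := by
    rw [← Int.natCast_floor_eq_floor (by positivity),
      ← Int.natCast_floor_eq_floor (by positivity), h]
  have hlt := Int.abs_sub_lt_one_of_floor_eq_floor hfloor
  rw [← mul_sub, abs_mul, abs_of_pos hq'] at hlt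
  rw [lt_div_iff₀ hq']
  linarith

section SimultaneousApproximation

variable {ι : Type*} [Fintype ι] [DecidableEq ι] (x : ι → ℝ) {q : ℕ}

theorem exists_lt_le_pow_forall_abs_fract_sub_lt (hq : 0 < q) :
    ∃ j k : ℕ, j < k ∧ k ≤ q ^ Fintype.card ι ∧
      ∀ i, |Int.fract (k * x i) - Int.fract (j * x i)| < 1 / q := by
  have hq' : (0 : ℝ) < q := by exact_mod_cast hq
  let cell : ℕ → ι → ℕ := fun j i => ⌊q * Int.fract (j * x i)⌋₊
  have hcell : ∀ j ∈ range (q ^ Fintype.card ι + 1),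
      cell j ∈ Fintype.piFinset fun _ : ι => range q := fun j _ => by
    simp only [Fintype.mem_piFinset, mem_range, cell]
    exact fun i => (Nat.floor_lt (by positivity)).2 <|
      mul_lt_of_lt_one_right hq' (Int.fract_lt_one _)
  have hcard :
      #(Fintype.piFinset fun _ : ι => range q) < #(range (q ^ Fintype.card ι + 1)) := by
    simp
  have close : ∀ j k, cell j = cell k →
      ∀ i, |Int.fract (k * x i) - Int.fract (j * x i)| < 1 / q := fun j k h i =>
    abs_sub_lt_one_div_of_floor_mul_eq hq (Int.fract_nonneg _) (Int.fract_nonneg _)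
      (congrFun h i).symm
  obtain ⟨j, hj, k, hk, hne, hjk⟩ := exists_ne_map_eq_of_card_lt_of_maps_to hcard hcell
  rw [mem_range] at hj hk
  rcases hne.lt_or_gt with h | h
  · exact ⟨j, k, h, by omega, close j k hjk⟩
  · exact ⟨k, j, h, by omega, close k j hjk.symm⟩

theorem exists_nat_le_pow_forall_abs_mul_sub_int_lt (hq : 0 < q) :
    ∃ t : ℕ, 1 ≤ t ∧ t ≤ q ^ Fintype.card ι ∧
      ∀ i, ∃ m : ℤ, |t * x i - m| < 1 / q := by
  obtain ⟨j, k, hjk, hk, hclose⟩ := exists_lt_le_pow_forall_abs_fract_sub_lt x hq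
  refine ⟨k - j, by omega, by omega, fun i => ⟨⌊k * x i⌋ - ⌊j * x i⌋, ?_⟩⟩
  convert hclose i using 2
  push_cast [Nat.cast_sub hjk.le, Int.fract]
  ring

end SimultaneousApproximation

lemma cos_le_cos_of_abs_sub_int_mul_two_pi_le {θ δ : ℝ} {m : ℤ} (hδ : δ ≤ π)
    (h : |θ - m * (2 * π)| ≤ δ) : cos δ ≤ cos θ := by
  calc cos δ ≤ cos |θ - m * (2 * π)| := cos_le_cos_of_nonneg_of_le_pi (abs_nonneg _) hδ h
    _ = cos θ := by rw [cos_abs, cos_sub_int_mul_two_pi]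

theorem dirichlet_cos_large_general (N q : ℕ) (hq : 2 ≤ q) :
    ∃ t : ℝ, t ∈ Set.Icc (1 : ℝ) ((q : ℝ) ^ N) ∧
      ∀ n : ℕ, 1 ≤ n → n ≤ N →
        Real.cos (t * Real.log n) ≥ Real.cos (2 * Real.pi / q) := by
  obtain ⟨t, ht1, htq, happrox⟩ :=
    exists_nat_le_pow_forall_abs_mul_sub_int_lt (fun n : Icc 1 N => log n / (2 * π))
      (by omega : 0 < q)
  rw [Fintype.card_coe, Nat.card_Icc, Nat.add_sub_cancel] at htq
  refine ⟨t, ⟨by exact_mod_cast ht1, by exact_mod_cast htq⟩, fun n hn1 hnN => ?_⟩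
  obtain ⟨m, hm⟩ := happrox ⟨n, mem_Icc.2 ⟨hn1, hnN⟩⟩
  have hπ : 0 < 2 * π := by positivity
  have hq' : (2 : ℝ) ≤ q := by exact_mod_cast hq
  refine cos_le_cos_of_abs_sub_int_mul_two_pi_le (m := m) ?_ ?_
  · rw [div_le_iff₀ (by linarith)]
    nlinarith
  · calc |t * log n - m * (2 * π)| = |t * (log n / (2 * π)) - m| * (2 * π) := by
          rw [← abs_of_pos hπ, ← abs_mul, abs_of_pos hπ]
          congr 1
          field_simp
      _ ≤ 1 / q * (2 * π) := by gcongr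
      _ = 2 * π / q := by ring

theorem dirichlet_cos_large (N q : ℕ) (hN : 1 ≤ N) (hq : 2 ≤ q) :
    ∃ t : ℝ, t ∈ Set.Icc (1 : ℝ) ((q : ℝ) ^ N) ∧
      ∀ n : ℕ, 1 ≤ n → n ≤ N →
        Real.cos (t * Real.log n) ≥ Real.cos (2 * Real.pi / q) :=
  dirichlet_cos_large_general N q hq
end

section
/- Let b ≥ 2, r ≥ 1, 1 ≤ m ≤ r be integers and p_1 < ... < p_r the first r primes. Let M be the set of divisors of p_1^{b-1}⋯p_r^{b-1}, and let M_δ^{(1)} be the set of ordered pairs (m', n') ∈ M × M such that for every index i with m < i ≤ r, the exponent of p_i in m' is at most the exponent of p_i in n'. Then ∑_{(m',n') ∈ M_δ^{(1)}} gcd(m',n')/lcm(m',n') = ∏_{i ≤ m} ( b + 2 ∑_{ν=1}^{b-1} (b−ν)/p_i^ν ) · ∏_{m < i ≤ r} ( (1/p_i)^{b+1} − (b+1)/p_i + b ) (1 − 1/p_i)^{−2}. -/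
/-!
Write `m' = ∏ pᵢ^αᵢ`, `n' = ∏ pᵢ^βᵢ`: divisors of `∏ pᵢ^(b-1)` are exponent vectors in
`{0, …, b-1}^r`, and `gcd(m', n') / lcm(m', n') = ∏ (1/pᵢ)^|αᵢ - βᵢ|`. As the restriction
`αᵢ ≤ βᵢ` is coordinatewise too, the double sum is a product over the primes of sums over
exponent pairs `(a, c)`. There are `b` pairs with `a = c` and `2(b - ν)` with `|a - c| = ν > 0`;
under `a ≤ c` there are `b - ν` with `c - a = ν`, and `(1 - x)² ∑_{ν<b} (b - ν) xᵛ`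
telescopes to `x^(b+1) - (b+1) x + b`.
-/

open Finset

section PairSums

variable {R : Type*} [CommRing R] (x : R)

lemma sum_range_succ_sub_mul_pow (n : ℕ) :
    ∑ ν ∈ range (n + 1), (((n + 1 : ℕ) : R) - ν) * x ^ ν
      = ∑ ν ∈ range n, ((n : R) - ν) * x ^ ν + ∑ ν ∈ range (n + 1), x ^ ν := by
  calc ∑ ν ∈ range (n + 1), (((n + 1 : ℕ) : R) - ν) * x ^ ν
      = ∑ ν ∈ range (n + 1), (((n : R) - ν) * x ^ ν + x ^ ν) :=
        sum_congr rfl fun _ _ => by push_cast; ring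
    _ = _ := by rw [sum_add_distrib, sum_range_succ (fun ν => ((n : R) - ν) * x ^ ν)]; simp

lemma sum_range_sum_range_ite_le_pow_sub (n : ℕ) :
    ∑ a ∈ range n, ∑ c ∈ range n, (if a ≤ c then x ^ (c - a) else 0)
      = ∑ ν ∈ range n, ((n : R) - ν) * x ^ ν := by
  induction n with
  | zero => simp
  | succ n ih =>
    have last_row : ∑ c ∈ range n, (if n ≤ c then x ^ (c - n) else 0) = 0 :=
      sum_eq_zero fun c hc => if_neg (by simpa using hc)
    have last_column : ∑ a ∈ range (n + 1), (if a ≤ n then x ^ (n - a) else 0)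
        = ∑ ν ∈ range (n + 1), x ^ ν := by
      rw [← sum_range_reflect]
      refine sum_congr rfl fun a ha => ?_
      have := mem_range.mp ha
      rw [if_pos (by omega)]
      congr 1
      omega
    calc _ = ∑ a ∈ range (n + 1), ∑ c ∈ range n, (if a ≤ c then x ^ (c - a) else 0)
          + ∑ a ∈ range (n + 1), (if a ≤ n then x ^ (n - a) else 0) := by
          rw [← sum_add_distrib]
          exact sum_congr rfl fun a _ => sum_range_succ _ n
      _ = _ := by
          rw [sum_range_succ, ih, last_row, add_zero, last_column, sum_range_succ_sub_mul_pow]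

lemma sum_range_sub_mul_pow_mul_one_sub_sq (n : ℕ) :
    (∑ ν ∈ range n, ((n : R) - ν) * x ^ ν) * (1 - x) ^ 2
      = x ^ (n + 1) - (n + 1) * x + n := by
  induction n with
  | zero => simp
  | succ n ih =>
    rw [sum_range_succ_sub_mul_pow, add_mul, ih]
    push_cast
    linear_combination (x - 1) * geom_sum_mul x (n + 1)

lemma sum_range_sub_mul_pow_eq_div {K : Type*} [Field K] {x : K} (hx : x ≠ 1) (n : ℕ) :
    ∑ ν ∈ range n, ((n : K) - ν) * x ^ ν
      = (x ^ (n + 1) - (n + 1) * x + n) / (1 - x) ^ 2 := by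
  rw [eq_div_iff (pow_ne_zero _ (sub_ne_zero.mpr hx.symm)),
    sum_range_sub_mul_pow_mul_one_sub_sq]

lemma pow_max_sub_min (a c : ℕ) :
    x ^ (max a c - min a c)
      = (if a ≤ c then x ^ (c - a) else 0) + (if c ≤ a then x ^ (a - c) else 0)
        - if a = c then 1 else 0 := by
  rcases lt_trichotomy a c with h | rfl | h
  · simp [h.le, h.ne, h.not_ge]
  · simp
  · simp [h.le, h.ne', h.not_ge]

lemma sum_range_sum_range_pow_max_sub_min (n : ℕ) :
    ∑ a ∈ range n, ∑ c ∈ range n, x ^ (max a c - min a c)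
      = n + 2 * ∑ ν ∈ Icc 1 (n - 1), ((n : R) - ν) * x ^ ν := by
  simp only [pow_max_sub_min, sum_add_distrib, sum_sub_distrib]
  rw [sum_comm (f := fun a c => if c ≤ a then x ^ (a - c) else 0)]
  simp only [sum_range_sum_range_ite_le_pow_sub, sum_ite_eq, mem_range]
  have diagonal : ∑ a ∈ range n, (if a < n then (1 : R) else 0) = n := by
    simp [sum_ite_of_true (fun a ha => mem_range.mp ha)]
  rw [diagonal]
  rcases n with _ | n
  · simp
  · rw [range_eq_Ico, sum_eq_sum_Ico_succ_bot n.succ_pos, Nat.add_sub_cancel, zero_add,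
      ← Ico_add_one_right_eq_Icc]
    simp only [Nat.cast_add, Nat.cast_one, Nat.cast_zero, sub_zero, pow_zero, mul_one,
      Nat.succ_eq_add_one]
    ring

/-- The factor of one prime `p`, with `x = 1/p` and exponents in `[0, n)`. -/
def restrictedPairSum (P : Prop) [Decidable P] (n : ℕ) : R :=
  ∑ a ∈ range n, ∑ c ∈ range n, if P → a ≤ c then x ^ (max a c - min a c) else 0

lemma restrictedPairSum_of_not {P : Prop} [Decidable P] (hP : ¬P) (n : ℕ) :
    restrictedPairSum x P n = n + 2 * ∑ ν ∈ Icc 1 (n - 1), ((n : R) - ν) * x ^ ν := by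
  simp only [restrictedPairSum, hP, false_imp_iff, if_true, sum_range_sum_range_pow_max_sub_min]

lemma restrictedPairSum_of {P : Prop} [Decidable P] (hP : P) (n : ℕ) :
    restrictedPairSum x P n = ∑ ν ∈ range n, ((n : R) - ν) * x ^ ν := by
  rw [← sum_range_sum_range_ite_le_pow_sub]
  refine sum_congr rfl fun a _ => sum_congr rfl fun c _ => ?_
  simp only [hP, true_imp_iff]
  split_ifs with hac
  · rw [max_eq_right hac, min_eq_left hac]
  · rfl

end PairSums

lemma one_div_pow_max_sub_min {G : Type*} [GroupWithZero G] {a : G} (ha : a ≠ 0) (m n : ℕ) :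
    (1 / a) ^ (max m n - min m n) = a ^ min m n / a ^ max m n := by
  rw [one_div_pow, pow_sub₀ _ ha min_le_max, ← div_eq_mul_inv, one_div_div]

lemma Fintype.sum_piFinset_sum_piFinset_prod {ι R : Type*} [Fintype ι] [DecidableEq ι]
    [CommSemiring R] {κ : ι → Type*} (t : ∀ i, Finset (κ i))
    (w : ∀ i, κ i → κ i → R) :
    ∑ f ∈ piFinset t, ∑ g ∈ piFinset t, ∏ i, w i (f i) (g i)
      = ∏ i, ∑ a ∈ t i, ∑ c ∈ t i, w i a c := by
  rw [Finset.prod_univ_sum]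
  exact Finset.sum_congr rfl fun f _ => (Finset.prod_univ_sum _ _).symm

namespace Nat

variable {ι : Type*} [Fintype ι] {p : ι → ℕ}

lemma prod_pow_ne_zero (hp : ∀ i, (p i).Prime) (f : ι → ℕ) : ∏ i, p i ^ f i ≠ 0 :=
  prod_ne_zero_iff.mpr fun i _ => pow_ne_zero _ (hp i).ne_zero

lemma primeFactors_prod_pow_subset (hp : ∀ i, (p i).Prime) (f : ι → ℕ) :
    (∏ i, p i ^ f i).primeFactors ⊆ univ.image p := by
  intro q hq
  have hq_prime := prime_of_mem_primeFactors hq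
  obtain ⟨i, -, hi⟩ :=
    (Prime.dvd_finsetProd_iff hq_prime.prime _).mp (dvd_of_mem_primeFactors hq)
  rw [(prime_dvd_prime_iff_eq hq_prime (hp i)).mp (hq_prime.dvd_of_dvd_pow hi)]
  exact mem_image_of_mem p (mem_univ i)

lemma factorization_prod_pow_apply (hp : ∀ i, (p i).Prime) (hinj : Function.Injective p)
    (f : ι → ℕ) (j : ι) : (∏ i, p i ^ f i).factorization (p j) = f j := by
  rw [factorization_prod fun i _ => pow_ne_zero _ (hp i).ne_zero, Finsupp.finsetSum_apply]
  simp only [(hp _).factorization_pow, Finsupp.single_apply]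
  rw [Fintype.sum_eq_single j fun i hi => if_neg (hinj.ne hi), if_pos rfl]

lemma prod_pow_factorization_eq_self_of_dvd (hp : ∀ i, (p i).Prime)
    (hinj : Function.Injective p) {n : ℕ} {f : ι → ℕ} (hn : n ∣ ∏ i, p i ^ f i) :
    ∏ i, p i ^ n.factorization (p i) = n := by
  have hn0 : n ≠ 0 := ne_zero_of_dvd_ne_zero (prod_pow_ne_zero hp f) hn
  have hsupp : n.factorization.support ⊆ univ.image p := support_factorization n ▸
    (primeFactors_mono hn (prod_pow_ne_zero hp f)).trans (primeFactors_prod_pow_subset hp f)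
  conv_rhs => rw [← prod_factorization_pow_eq_self hn0]
  rw [Finsupp.prod_of_support_subset _ hsupp _ (fun _ _ => pow_zero _),
    prod_image fun i _ j _ hij => hinj hij]

lemma gcd_prod_pow (hp : ∀ i, (p i).Prime) (hinj : Function.Injective p) (f g : ι → ℕ) :
    gcd (∏ i, p i ^ f i) (∏ i, p i ^ g i) = ∏ i, p i ^ min (f i) (g i) := by
  rw [← prod_pow_factorization_eq_self_of_dvd hp hinj (gcd_dvd_left _ _),
    factorization_gcd (prod_pow_ne_zero hp f) (prod_pow_ne_zero hp g)]
  simp only [Finsupp.inf_apply, factorization_prod_pow_apply hp hinj]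

lemma lcm_prod_pow (hp : ∀ i, (p i).Prime) (hinj : Function.Injective p) (f g : ι → ℕ) :
    lcm (∏ i, p i ^ f i) (∏ i, p i ^ g i) = ∏ i, p i ^ max (f i) (g i) := by
  have hdvd : lcm (∏ i, p i ^ f i) (∏ i, p i ^ g i) ∣ ∏ i, p i ^ (f i + g i) := by
    simpa only [pow_add, prod_mul_distrib] using lcm_dvd_mul _ _
  rw [← prod_pow_factorization_eq_self_of_dvd hp hinj hdvd,
    factorization_lcm (prod_pow_ne_zero hp f) (prod_pow_ne_zero hp g)]
  simp only [Finsupp.sup_apply, factorization_prod_pow_apply hp hinj]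

lemma sum_divisors_prod_pow [DecidableEq ι] {M : Type*} [AddCommMonoid M] (hp : ∀ i, (p i).Prime)
    (hinj : Function.Injective p) (e : ι → ℕ) (F : ℕ → M) :
    ∑ d ∈ (∏ i, p i ^ e i).divisors, F d
      = ∑ f ∈ Fintype.piFinset fun i => range (e i + 1), F (∏ i, p i ^ f i) := by
  have hN := prod_pow_ne_zero hp e
  refine sum_nbij' (fun d i => d.factorization (p i)) (fun f => ∏ i, p i ^ f i) ?_ ?_ ?_ ?_ ?_
  · intro d hd
    have hd := dvd_of_mem_divisors hd
    simp only [Fintype.mem_piFinset, mem_range, Nat.lt_succ_iff]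
    intro i
    rw [← factorization_prod_pow_apply hp hinj e i]
    exact (factorization_le_iff_dvd (ne_zero_of_dvd_ne_zero hN hd) hN).mpr hd (p i)
  · intro f hf
    simp only [Fintype.mem_piFinset, mem_range, Nat.lt_succ_iff] at hf
    exact mem_divisors.mpr ⟨prod_dvd_prod_of_dvd _ _ fun i _ => pow_dvd_pow _ (hf i), hN⟩
  · intro d hd
    exact prod_pow_factorization_eq_self_of_dvd hp hinj (dvd_of_mem_divisors hd)
  · intro f _
    exact funext (factorization_prod_pow_apply hp hinj f)
  · intro d hd
    rw [prod_pow_factorization_eq_self_of_dvd hp hinj (dvd_of_mem_divisors hd)]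

lemma cast_gcd_div_cast_lcm_prod_pow {K : Type*} [Field K] [CharZero K] (hp : ∀ i, (p i).Prime)
    (hinj : Function.Injective p) (f g : ι → ℕ) :
    (gcd (∏ i, p i ^ f i) (∏ i, p i ^ g i) : K) / lcm (∏ i, p i ^ f i) (∏ i, p i ^ g i)
      = ∏ i, (1 / (p i : K)) ^ (max (f i) (g i) - min (f i) (g i)) := by
  rw [gcd_prod_pow hp hinj, lcm_prod_pow hp hinj]
  push_cast
  rw [← prod_div_distrib]
  exact prod_congr rfl fun i _ =>
    (one_div_pow_max_sub_min (by exact_mod_cast (hp i).ne_zero) _ _).symm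

theorem sum_divisors_sum_divisors_ite_gcd_div_lcm [DecidableEq ι] {K : Type*} [Field K]
    [CharZero K] (hp : ∀ i, (p i).Prime) (hinj : Function.Injective p) (e : ι → ℕ)
    (P : ι → Prop) [DecidablePred P] :
    ∑ d ∈ (∏ i, p i ^ e i).divisors, ∑ d' ∈ (∏ i, p i ^ e i).divisors,
      (if ∀ i, P i → d.factorization (p i) ≤ d'.factorization (p i)
        then (gcd d d' : K) / lcm d d' else 0)
      = ∏ i, restrictedPairSum (1 / (p i : K)) (P i) (e i + 1) := by
  simp only [restrictedPairSum]
  rw [← Fintype.sum_piFinset_sum_piFinset_prod, sum_divisors_prod_pow hp hinj]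
  refine sum_congr rfl fun f _ => ?_
  rw [sum_divisors_prod_pow hp hinj]
  refine sum_congr rfl fun g _ => ?_
  rw [Fintype.prod_ite_zero, cast_gcd_div_cast_lcm_prod_pow hp hinj]
  simp only [factorization_prod_pow_apply hp hinj]

end Nat

theorem gal_sum_restricted_pairs_general (b r m : ℕ) (hb : 2 ≤ b) (hmr : m ≤ r) :
    ∑ m' ∈ (∏ i ∈ Finset.range r, Nat.nth Nat.Prime i ^ (b - 1)).divisors,
      ∑ n' ∈ (∏ i ∈ Finset.range r, Nat.nth Nat.Prime i ^ (b - 1)).divisors,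
        (if ∀ i ∈ Finset.Ico m r,
            m'.factorization (Nat.nth Nat.Prime i) ≤ n'.factorization (Nat.nth Nat.Prime i)
          then (Nat.gcd m' n' : ℝ) / (Nat.lcm m' n' : ℝ) else 0) =
    (∏ i ∈ Finset.range m,
        ((b : ℝ) + 2 * ∑ ν ∈ Finset.Icc 1 (b - 1),
          ((b : ℝ) - (ν : ℝ)) / (Nat.nth Nat.Prime i : ℝ) ^ ν)) *
      ∏ i ∈ Finset.Ico m r,
        ((1 / (Nat.nth Nat.Prime i : ℝ)) ^ (b + 1) -
            ((b : ℝ) + 1) / (Nat.nth Nat.Prime i : ℝ) + (b : ℝ)) /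
          (1 - 1 / (Nat.nth Nat.Prime i : ℝ)) ^ 2 := by
  have hp (i : ℕ) : (Nat.nth Nat.Prime i).Prime := Nat.prime_nth_prime i
  have hinj : Function.Injective fun i : Fin r => Nat.nth Nat.Prime i :=
    (Nat.nth_injective Nat.infinite_setOfPred_prime).comp Fin.val_injective
  have hcond (d d' : ℕ) : (∀ i ∈ Ico m r,
      d.factorization (Nat.nth Nat.Prime i) ≤ d'.factorization (Nat.nth Nat.Prime i)) ↔
      ∀ i : Fin r, m ≤ i →
        d.factorization (Nat.nth Nat.Prime i) ≤ d'.factorization (Nat.nth Nat.Prime i) :=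
    ⟨fun h i hi => h i (mem_Ico.mpr ⟨hi, i.isLt⟩),
      fun h i hi => h ⟨i, (mem_Ico.mp hi).2⟩ (mem_Ico.mp hi).1⟩
  rw [← Fin.prod_univ_eq_prod_range (fun i => Nat.nth Nat.Prime i ^ (b - 1))]
  refine .trans (sum_congr rfl fun d _ => sum_congr rfl fun d' _ => ?_)
    ((Nat.sum_divisors_sum_divisors_ite_gcd_div_lcm (fun i : Fin r => hp i) hinj (fun _ => b - 1)
      (m ≤ ·)).trans ?_)
  · -- `congr` also matches the two different `Decidable` instances of the condition
    congr 1
    exact propext (hcond d d')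
  rw [Nat.sub_add_cancel (by omega : 1 ≤ b),
    Fin.prod_univ_eq_prod_range
      (fun i => restrictedPairSum (1 / (Nat.nth Nat.Prime i : ℝ)) (m ≤ i) b),
    ← prod_range_mul_prod_Ico _ hmr]
  congr 1
  · refine prod_congr rfl fun i hi => ?_
    rw [restrictedPairSum_of_not _ (by simpa using hi)]
    simp only [one_div_pow, mul_one_div]
  · refine prod_congr rfl fun i hi => ?_
    have hx : 1 / (Nat.nth Nat.Prime i : ℝ) ≠ 1 := by
      rw [Ne, one_div, inv_eq_one]
      exact_mod_cast (hp i).one_lt.ne'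
    rw [restrictedPairSum_of _ (mem_Ico.mp hi).1, sum_range_sub_mul_pow_eq_div hx, mul_one_div]

theorem gal_sum_restricted_pairs (b r m : ℕ) (hb : 2 ≤ b) (hr : 1 ≤ r)
    (hm : 1 ≤ m) (hmr : m ≤ r) :
    ∑ m' ∈ (∏ i ∈ Finset.range r, Nat.nth Nat.Prime i ^ (b - 1)).divisors,
      ∑ n' ∈ (∏ i ∈ Finset.range r, Nat.nth Nat.Prime i ^ (b - 1)).divisors,
        (if ∀ i ∈ Finset.Ico m r,
            m'.factorization (Nat.nth Nat.Prime i) ≤ n'.factorization (Nat.nth Nat.Prime i)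
          then (Nat.gcd m' n' : ℝ) / (Nat.lcm m' n' : ℝ) else 0) =
    (∏ i ∈ Finset.range m,
        ((b : ℝ) + 2 * ∑ ν ∈ Finset.Icc 1 (b - 1),
          ((b : ℝ) - (ν : ℝ)) / (Nat.nth Nat.Prime i : ℝ) ^ ν)) *
      ∏ i ∈ Finset.Ico m r,
        ((1 / (Nat.nth Nat.Prime i : ℝ)) ^ (b + 1) -
            ((b : ℝ) + 1) / (Nat.nth Nat.Prime i : ℝ) + (b : ℝ)) /
          (1 - 1 / (Nat.nth Nat.Prime i : ℝ)) ^ 2 :=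
  gal_sum_restricted_pairs_general b r m hb hmr
end
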